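/- (Min–max characterization for the sparsity-penalized problem.) Suppose that for every z ∈ {0,1}^n the set {x ∈ ℝ^n : Ax ≤ b and x_j = 0 for every j with z_j = 0} is nonempty. Then the optimal value U*_k of (W_k) satisfies U*_k = min_{z ∈ {0,1}^n} sup_{α ∈ ℝ^k, β ∈ ℝ^m, β ≥ 0} H(z, α, β). -/

import Mathlib

open Matrix Finset

noncomputable def gam {n k m : ℕ} (V : Matrix (Fin n) (Fin k) ℝ) (lam : Fin k → ℝ)
    (c : Fin n → ℝ) (A : Matrix (Fin m) (Fin n) ℝ) (α : Fin k → ℝ) (β : Fin m → ℝ) :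
    Fin n → ℝ :=
  c + V.mulVec (fun i => Real.sqrt (lam i) * α i) + Aᵀ.mulVec β

noncomputable def Hfun {n k m : ℕ} (V : Matrix (Fin n) (Fin k) ℝ) (lam : Fin k → ℝ)
    (c : Fin n → ℝ) (A : Matrix (Fin m) (Fin n) ℝ) (b : Fin m → ℝ) (η θ : ℝ)
    (z : Fin n → ℝ) (α : Fin k → ℝ) (β : Fin m → ℝ) : ℝ :=
  θ * (∑ j, z j) - (β ⬝ᵥ b) - (1/4) * (∑ i, (α i)^2)
    - (η/4) * (∑ j, z j * (gam V lam c A α β j)^2)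

namespace Stmt14Aux

lemma sq_aux (t a g : ℝ) (ht : 0 < t) :
    (a / Real.sqrt t + Real.sqrt t * g / 2)^2 = t⁻¹*a^2 + a*g + t/4*g^2 := by
  have h2 : Real.sqrt t ^ 2 = t := Real.sq_sqrt ht.le
  have hne : Real.sqrt t ≠ 0 := by positivity
  have e : a / Real.sqrt t + Real.sqrt t * g / 2 = (a + t * g / 2) / Real.sqrt t := by
    field_simp
    linear_combination g * h2
  rw [e, div_pow, h2]
  field_simp
  ring

noncomputable def fobj {n k : ℕ} (V : Matrix (Fin n) (Fin k) ℝ) (lam : Fin k → ℝ)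
    (c : Fin n → ℝ) (η : ℝ) (x : Fin n → ℝ) : ℝ :=
  c ⬝ᵥ x + (∑ i, lam i * ((fun j => V j i) ⬝ᵥ x)^2) + η⁻¹ * (∑ j, (x j)^2)

theorem key {n k m : ℕ} (V : Matrix (Fin n) (Fin k) ℝ) (lam : Fin k → ℝ)
    (c : Fin n → ℝ) (A : Matrix (Fin m) (Fin n) ℝ) (b : Fin m → ℝ) (η θ : ℝ)
    (hlam : ∀ i, 0 ≤ lam i) (hη : 0 < η)
    (z x : Fin n → ℝ) (hz : ∀ j, z j = 0 ∨ z j = 1) (hx : ∀ j, z j = 0 → x j = 0)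
    (α : Fin k → ℝ) (β : Fin m → ℝ) :
    fobj V lam c η x + θ * (∑ j, z j) - Hfun V lam c A b η θ z α β
      = (∑ i, β i * (b i - A.mulVec x i))
        + (∑ i, (Real.sqrt (lam i) * ((fun j => V j i) ⬝ᵥ x) - α i / 2)^2)
        + (∑ j, z j * (x j / Real.sqrt η + Real.sqrt η * gam V lam c A α β j / 2)^2) := by
  set w : Fin k → ℝ := fun i => (fun j => V j i) ⬝ᵥ x with hw
  set γ : Fin n → ℝ := gam V lam c A α β with hγ
  have hsq1 : ∀ i, (Real.sqrt (lam i) * w i - α i / 2)^2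
      = lam i * (w i)^2 - Real.sqrt (lam i) * α i * w i + (α i)^2/4 := by
    intro i
    have h := Real.sq_sqrt (hlam i)
    linear_combination (w i)^2 * h
  have hsq2 : ∀ j, z j * (x j / Real.sqrt η + Real.sqrt η * γ j / 2)^2
      = η⁻¹ * (x j)^2 + x j * γ j + (η/4) * (z j * (γ j)^2) := by
    intro j
    rcases hz j with h0 | h1
    · simp [h0, hx j h0]
    · rw [h1, sq_aux _ _ _ hη]; ring
  have e1 : (∑ i, (Real.sqrt (lam i) * w i - α i / 2)^2)
      = (∑ i, lam i * (w i)^2) - (∑ i, Real.sqrt (lam i) * α i * w i)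
        + (1/4) * (∑ i, (α i)^2) := by
    rw [Finset.sum_congr rfl fun i _ => hsq1 i]
    rw [Finset.sum_add_distrib, Finset.sum_sub_distrib, Finset.mul_sum]
    congr 1
    apply Finset.sum_congr rfl
    intros; ring
  have e2 : (∑ j, z j * (x j / Real.sqrt η + Real.sqrt η * γ j / 2)^2)
      = η⁻¹ * (∑ j, (x j)^2) + (∑ j, x j * γ j)
        + (η/4) * (∑ j, z j * (γ j)^2) := by
    rw [Finset.sum_congr rfl fun j _ => hsq2 j]
    rw [Finset.sum_add_distrib, Finset.sum_add_distrib, ← Finset.mul_sum, ← Finset.mul_sum]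
  have eswap1 : (∑ j, ∑ i, x j * (V j i * (Real.sqrt (lam i) * α i)))
      = ∑ i, Real.sqrt (lam i) * α i * w i := by
    rw [Finset.sum_comm]
    apply Finset.sum_congr rfl
    intro i _
    simp only [hw, dotProduct, Finset.mul_sum]
    apply Finset.sum_congr rfl
    intros; ring
  have eswap2 : (∑ j, ∑ i, x j * (A i j * β i)) = ∑ i, β i * A.mulVec x i := by
    rw [Finset.sum_comm]
    apply Finset.sum_congr rfl
    intro i _
    simp only [mulVec, dotProduct, Finset.mul_sum]
    apply Finset.sum_congr rfl
    intros; ring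
  have eswap : (∑ j, x j * γ j)
      = c ⬝ᵥ x + (∑ i, Real.sqrt (lam i) * α i * w i) + (∑ i, β i * A.mulVec x i) := by
    simp only [hγ, gam, Pi.add_apply, mulVec, dotProduct, Matrix.transpose_apply, mul_add,
      Finset.mul_sum]
    rw [Finset.sum_add_distrib, Finset.sum_add_distrib]
    rw [show (∑ j, ∑ i, x j * (V j i * (Real.sqrt (lam i) * α i)))
        = ∑ i, Real.sqrt (lam i) * α i * w i from eswap1]
    rw [show (∑ j, ∑ i, x j * (A i j * β i)) = ∑ i, β i * A.mulVec x i from eswap2]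
    congr 1
    · congr 1
      simp [dotProduct, mul_comm]
    · simp [mulVec, dotProduct, Finset.mul_sum]
  have eb : (∑ i, β i * (b i - A.mulVec x i)) = (β ⬝ᵥ b) - (∑ i, β i * A.mulVec x i) := by
    simp only [mul_sub]
    rw [Finset.sum_sub_distrib]
    rfl
  rw [e1, e2, eswap, eb]
  simp only [fobj, Hfun, ← hγ]
  ring

end Stmt14Aux

namespace Stmt14Aux
open Matrix Finset

variable {n k m : ℕ} (V : Matrix (Fin n) (Fin k) ℝ) (lam : Fin k → ℝ)
  (c : Fin n → ℝ) (A : Matrix (Fin m) (Fin n) ℝ) (b : Fin m → ℝ) (η θ : ℝ)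

lemma weak (hlam : ∀ i, 0 ≤ lam i) (hη : 0 < η)
    (z x : Fin n → ℝ) (hz : ∀ j, z j = 0 ∨ z j = 1) (hx : ∀ j, z j = 0 → x j = 0)
    (hAx : ∀ i, A.mulVec x i ≤ b i) (α : Fin k → ℝ) (β : Fin m → ℝ) (hβ : ∀ i, 0 ≤ β i) :
    Hfun V lam c A b η θ z α β ≤ fobj V lam c η x + θ * (∑ j, z j) := by
  have h := key V lam c A b η θ hlam hη z x hz hx α β
  have h1 : 0 ≤ ∑ i, β i * (b i - A.mulVec x i) :=
    Finset.sum_nonneg fun i _ => mul_nonneg (hβ i) (sub_nonneg.2 (hAx i))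
  have h2 : 0 ≤ ∑ i, (Real.sqrt (lam i) * ((fun j => V j i) ⬝ᵥ x) - α i / 2)^2 :=
    Finset.sum_nonneg fun i _ => sq_nonneg _
  have h3 : 0 ≤ ∑ j, z j * (x j / Real.sqrt η + Real.sqrt η * gam V lam c A α β j / 2)^2 :=
    Finset.sum_nonneg fun j _ => mul_nonneg (by rcases hz j with h|h <;> simp [h]) (sq_nonneg _)
  linarith

lemma pw_bound (hη : 0 < η) (cc xx : ℝ) :
    (2*η)⁻¹ * xx^2 - (η/2) * cc^2 ≤ cc*xx + η⁻¹*xx^2 := by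
  have hu : η * η⁻¹ = 1 := mul_inv_cancel₀ (ne_of_gt hη)
  have h2 : (2*η)⁻¹ = η⁻¹/2 := by
    rw [mul_inv]
    ring
  rw [h2]
  nlinarith [sq_nonneg (xx + η*cc), mul_pos hη hη, sq_nonneg xx, hη]

lemma flb (hlam : ∀ i, 0 ≤ lam i) (hη : 0 < η) (x : Fin n → ℝ) :
    (2*η)⁻¹ * (∑ j, (x j)^2) - (η/2) * (∑ j, (c j)^2) ≤ fobj V lam c η x := by
  have h1 : 0 ≤ ∑ i, lam i * ((fun j => V j i) ⬝ᵥ x)^2 :=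
    Finset.sum_nonneg fun i _ => mul_nonneg (hlam i) (sq_nonneg _)
  have h2 : (∑ j, ((2*η)⁻¹ * (x j)^2 - (η/2) * (c j)^2)) ≤ ∑ j, (c j * x j + η⁻¹ * (x j)^2) :=
    Finset.sum_le_sum fun j _ => pw_bound η hη (c j) (x j)
  have e1 : (∑ j, ((2*η)⁻¹ * (x j)^2 - (η/2) * (c j)^2))
      = (2*η)⁻¹ * (∑ j, (x j)^2) - (η/2) * (∑ j, (c j)^2) := by
    rw [Finset.sum_sub_distrib, ← Finset.mul_sum, ← Finset.mul_sum]
  have e2 : (∑ j, (c j * x j + η⁻¹ * (x j)^2)) = c ⬝ᵥ x + η⁻¹ * (∑ j, (x j)^2) := by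
    rw [Finset.sum_add_distrib, ← Finset.mul_sum]
    rfl
  rw [e1, e2] at h2
  simp only [fobj]
  linarith

lemma gq (u v : ℝ) : (max 0 v)^2 ≤ (max 0 u)^2 + 2*(max 0 u)*(v-u) + (v-u)^2 := by
  have e : ∀ u : ℝ, max 0 u = if 0 ≤ u then u else 0 := by
    intro u
    split_ifs with hh
    · exact max_eq_right hh
    · exact max_eq_left (le_of_lt (lt_of_not_ge hh))
  rw [e u, e v]
  split_ifs <;> nlinarith

lemma cont_fobj : Continuous (fobj V lam c η) := by
  unfold fobj dotProduct
  fun_prop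

lemma cont_pen (t : ℝ) :
    Continuous (fun x : Fin n → ℝ => t * ∑ i, (max 0 (A.mulVec x i - b i))^2) := by
  simp only [mulVec, dotProduct]
  fun_prop

end Stmt14Aux

namespace Stmt14Aux
open Matrix Finset

variable {n k m : ℕ} (V : Matrix (Fin n) (Fin k) ℝ) (lam : Fin k → ℝ)
  (c : Fin n → ℝ) (A : Matrix (Fin m) (Fin n) ℝ) (b : Fin m → ℝ) (η : ℝ)

/-- the penalized objective -/
noncomputable def Pen (t : ℝ) (x : Fin n → ℝ) : ℝ :=
  fobj V lam c η x + t * ∑ i, (max 0 (A.mulVec x i - b i))^2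

lemma pen_nonneg (t : ℝ) (ht : 0 ≤ t) (x : Fin n → ℝ) :
    0 ≤ t * ∑ i, (max 0 (A.mulVec x i - b i))^2 :=
  mul_nonneg ht (Finset.sum_nonneg fun i _ => sq_nonneg _)

lemma cont_Pen (t : ℝ) : Continuous (Pen V lam c A b η t) := by
  exact (cont_fobj V lam c η).add (cont_pen A b t)

lemma isClosed_E (z : Fin n → ℝ) : IsClosed {x : Fin n → ℝ | ∀ j, z j = 0 → x j = 0} := by
  have : {x : Fin n → ℝ | ∀ j, z j = 0 → x j = 0}
      = ⋂ j, {x : Fin n → ℝ | z j = 0 → x j = 0} := by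
    ext x; simp
  rw [this]
  apply isClosed_iInter
  intro j
  by_cases h : z j = 0
  · simp only [h, forall_true_left]
    exact isClosed_eq (continuous_apply j) continuous_const
  · simp [h]

lemma exists_min (hlam : ∀ i, 0 ≤ lam i) (hη : 0 < η)
    (z : Fin n → ℝ) (t : ℝ) (ht : 0 ≤ t) :
    ∃ x : Fin n → ℝ, (∀ j, z j = 0 → x j = 0) ∧
      ∀ y : Fin n → ℝ, (∀ j, z j = 0 → y j = 0) →
        Pen V lam c A b η t x ≤ Pen V lam c A b η t y := by
  classical
  set P := Pen V lam c A b η t with hP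
  set Cc := ∑ j, (c j)^2 with hCc
  have hCc0 : 0 ≤ Cc := Finset.sum_nonneg fun j _ => sq_nonneg _
  set R2 : ℝ := 2*η*(P 0 + (η/2)*Cc) with hR2
  have hf0 : fobj V lam c η 0 = 0 := by simp [fobj]
  have hP0 : 0 ≤ P 0 := by
    rw [hP]
    unfold Pen
    rw [hf0]
    simpa using pen_nonneg A b t ht 0
  have hR20 : 0 ≤ R2 := by
    apply mul_nonneg (by linarith)
    have : 0 ≤ (η/2)*Cc := mul_nonneg (by linarith) hCc0
    linarith
  have hcoer : ∀ x : Fin n → ℝ, R2 < ∑ j, (x j)^2 → P 0 < P x := by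
    intro x hx
    have h1 := flb V lam c η hlam hη x
    have h2 : fobj V lam c η x ≤ P x := by
      rw [hP]; unfold Pen
      have := pen_nonneg A b t ht x
      linarith
    have h3 : (2*η)⁻¹ * R2 = P 0 + (η/2)*Cc := by
      rw [hR2]
      field_simp
    have h4 : (2*η)⁻¹ * R2 < (2*η)⁻¹ * ∑ j, (x j)^2 := by
      apply mul_lt_mul_of_pos_left hx
      positivity
    rw [h3] at h4
    linarith
  set K : Set (Fin n → ℝ) :=
    {x | ∀ j, z j = 0 → x j = 0} ∩ {x | ∑ j, (x j)^2 ≤ R2} with hK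
  have hKne : (0 : Fin n → ℝ) ∈ K := by
    constructor
    · intro j _; rfl
    · simpa using hR20
  have hKclosed : IsClosed K := by
    apply (isClosed_E z).inter
    have : Continuous (fun x : Fin n → ℝ => ∑ j, (x j)^2) := by fun_prop
    exact isClosed_le this continuous_const
  have hKbdd : Bornology.IsBounded K := by
    apply (Metric.isBounded_closedBall (x := (0 : Fin n → ℝ)) (r := Real.sqrt R2)).subset
    intro x hx
    rw [Metric.mem_closedBall]
    rw [dist_pi_le_iff (Real.sqrt_nonneg _)]
    intro j
    rw [Real.dist_eq]
    simp only [Pi.zero_apply, sub_zero]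
    rw [← Real.sqrt_sq_eq_abs]
    apply Real.sqrt_le_sqrt
    calc (x j)^2 ≤ ∑ j', (x j')^2 :=
          Finset.single_le_sum (fun j' _ => sq_nonneg (x j')) (mem_univ j)
      _ ≤ R2 := hx.2
  have hKcomp : IsCompact K := Metric.isCompact_of_isClosed_isBounded hKclosed hKbdd
  obtain ⟨x0, hx0K, hx0min⟩ :=
    hKcomp.exists_isMinOn ⟨0, hKne⟩ (cont_Pen V lam c A b η t).continuousOn
  refine ⟨x0, hx0K.1, ?_⟩
  intro y hy
  rcases le_or_gt (∑ j, (y j)^2) R2 with hle | hgt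
  · exact hx0min ⟨hy, hle⟩
  · have h1 : P x0 ≤ P 0 := hx0min hKne
    have h2 := hcoer y hgt
    linarith

end Stmt14Aux

namespace Stmt14Aux
open Matrix Finset

variable {n k m : ℕ} (V : Matrix (Fin n) (Fin k) ℝ) (lam : Fin k → ℝ)
  (c : Fin n → ℝ) (A : Matrix (Fin m) (Fin n) ℝ) (b : Fin m → ℝ) (η : ℝ)

lemma stat (hlam : ∀ i, 0 ≤ lam i) (hη : 0 < η)
    (z : Fin n → ℝ) (t : ℝ) (ht : 0 ≤ t) (x : Fin n → ℝ)
    (hxE : ∀ j, z j = 0 → x j = 0)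
    (hmin : ∀ y : Fin n → ℝ, (∀ j, z j = 0 → y j = 0) →
      Pen V lam c A b η t x ≤ Pen V lam c A b η t y)
    (j : Fin n) (hzj : z j = 1) :
    c j + 2*(∑ i, lam i * ((fun l => V l i) ⬝ᵥ x) * V j i) + 2*η⁻¹*(x j)
      + (∑ i, (2*t*max 0 (A.mulVec x i - b i)) * A i j) = 0 := by
  classical
  set w : Fin k → ℝ := fun i => (fun l => V l i) ⬝ᵥ x with hw
  set D : ℝ := c j + 2*(∑ i, lam i * w i * V j i) + 2*η⁻¹*(x j)
      + (∑ i, (2*t*max 0 (A.mulVec x i - b i)) * A i j) with hD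
  set MM : ℝ := (∑ i, lam i * (V j i)^2) + η⁻¹ + t * (∑ i, (A i j)^2) with hMM
  have hMM0 : 0 < MM := by
    rw [hMM]
    have h1 : 0 ≤ ∑ i, lam i * (V j i)^2 :=
      Finset.sum_nonneg fun i _ => mul_nonneg (hlam i) (sq_nonneg _)
    have h2 : 0 ≤ t * (∑ i, (A i j)^2) :=
      mul_nonneg ht (Finset.sum_nonneg fun i _ => sq_nonneg _)
    have h3 : 0 < η⁻¹ := inv_pos.2 hη
    linarith
  have hs : ∀ s : ℝ, 0 ≤ s * D + s^2 * MM := by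
    intro s
    set e : Fin n → ℝ := fun l => if l = j then 1 else 0 with he
    set x' : Fin n → ℝ := fun l => x l + s * e l with hx'
    have hx'E : ∀ l, z l = 0 → x' l = 0 := by
      intro l hl
      have hxl := hxE l hl
      rw [hx']
      simp only [he]
      rcases eq_or_ne l j with rfl | hne
      · rw [hzj] at hl; norm_num at hl
      · simp [hne, hxl]
    have hup := hmin x' hx'E
    have ew : ∀ i : Fin k, ((fun l => V l i) ⬝ᵥ x') = w i + s * V j i := by
      intro i
      simp only [hx', he, dotProduct, hw]
      rw [Finset.sum_congr rfl fun l (_ : l ∈ univ) =>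
        show V l i * (x l + s * (if l = j then (1:ℝ) else 0))
            = V l i * x l + (if l = j then s * V l i else 0) from by split_ifs <;> ring]
      rw [Finset.sum_add_distrib, Finset.sum_ite_eq' univ j (fun l => s * V l i)]
      simp
    have eA : ∀ i : Fin m, A.mulVec x' i = A.mulVec x i + s * A i j := by
      intro i
      simp only [hx', he, mulVec, dotProduct]
      rw [Finset.sum_congr rfl fun l (_ : l ∈ univ) =>
        show A i l * (x l + s * (if l = j then (1:ℝ) else 0))
            = A i l * x l + (if l = j then s * A i l else 0) from by split_ifs <;> ring]
      rw [Finset.sum_add_distrib, Finset.sum_ite_eq' univ j (fun l => s * A i l)]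
      simp
    have ex2 : (∑ l, (x' l)^2) = (∑ l, (x l)^2) + (2*s*(x j) + s^2) := by
      simp only [hx', he]
      rw [Finset.sum_congr rfl fun l (_ : l ∈ univ) =>
        show (x l + s * (if l = j then (1:ℝ) else 0))^2
            = (x l)^2 + (if l = j then 2*s*(x l) + s^2 else 0) from by split_ifs <;> ring]
      rw [Finset.sum_add_distrib, Finset.sum_ite_eq' univ j (fun l => 2*s*(x l) + s^2)]
      simp
    have ec : c ⬝ᵥ x' = c ⬝ᵥ x + s * c j := by
      simp only [hx', he, dotProduct]
      rw [Finset.sum_congr rfl fun l (_ : l ∈ univ) =>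
        show c l * (x l + s * (if l = j then (1:ℝ) else 0))
            = c l * x l + (if l = j then s * c l else 0) from by split_ifs <;> ring]
      rw [Finset.sum_add_distrib, Finset.sum_ite_eq' univ j (fun l => s * c l)]
      simp [mul_comm]
    have eV2 : (∑ i, lam i * ((fun l => V l i) ⬝ᵥ x')^2)
        = (∑ i, lam i * (w i)^2) + s*(∑ i, 2*(lam i * w i * V j i))
          + s^2*(∑ i, lam i*(V j i)^2) := by
      have hpt : ∀ i : Fin k, lam i * ((fun l => V l i) ⬝ᵥ x')^2
          = lam i * (w i)^2 + s*(2*(lam i * w i * V j i)) + s^2*(lam i*(V j i)^2) := by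
        intro i
        rw [ew i]
        ring
      rw [Finset.sum_congr rfl fun i _ => hpt i, Finset.sum_add_distrib,
        Finset.sum_add_distrib, ← Finset.mul_sum, ← Finset.mul_sum, ← Finset.mul_sum]
    have efobj : fobj V lam c η x'
        = fobj V lam c η x + s * (c j + (∑ i, 2*(lam i * w i * V j i)) + 2*η⁻¹*(x j))
          + s^2 * ((∑ i, lam i*(V j i)^2) + η⁻¹) := by
      unfold fobj
      rw [ec, ex2, eV2]
      ring
    have hgq : ∀ i : Fin m, (max 0 (A.mulVec x' i - b i))^2
        ≤ (max 0 (A.mulVec x i - b i))^2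
          + 2*(max 0 (A.mulVec x i - b i))*(s*A i j) + (s*A i j)^2 := by
      intro i
      have h := gq (A.mulVec x i - b i) (A.mulVec x' i - b i)
      rw [show A.mulVec x' i - b i - (A.mulVec x i - b i) = s * A i j from by
        rw [eA i]; ring] at h
      exact h
    have hpen : t * (∑ i, (max 0 (A.mulVec x' i - b i))^2)
        ≤ t * (∑ i, (max 0 (A.mulVec x i - b i))^2)
          + s * (∑ i, (2*t*max 0 (A.mulVec x i - b i)) * A i j)
          + s^2 * (t * (∑ i, (A i j)^2)) := by
      have h1 := Finset.sum_le_sum fun i (_ : i ∈ univ) => hgq i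
      have h2 : (∑ i, ((max 0 (A.mulVec x i - b i))^2
            + 2*(max 0 (A.mulVec x i - b i))*(s*A i j) + (s*A i j)^2))
          = (∑ i, (max 0 (A.mulVec x i - b i))^2)
            + s*(∑ i, 2*(max 0 (A.mulVec x i - b i))*A i j)
            + s^2*(∑ i, (A i j)^2) := by
        have hpt : ∀ i : Fin m, (max 0 (A.mulVec x i - b i))^2
              + 2*(max 0 (A.mulVec x i - b i))*(s*A i j) + (s*A i j)^2
            = (max 0 (A.mulVec x i - b i))^2
              + s*(2*(max 0 (A.mulVec x i - b i))*A i j) + s^2*((A i j)^2) := by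
          intro i; ring
        rw [Finset.sum_congr rfl fun i _ => hpt i, Finset.sum_add_distrib,
          Finset.sum_add_distrib, ← Finset.mul_sum, ← Finset.mul_sum]
      rw [h2] at h1
      have h3 := mul_le_mul_of_nonneg_left h1 ht
      have e3 : (∑ i, (2*t*max 0 (A.mulVec x i - b i)) * A i j)
          = t * (∑ i, 2*(max 0 (A.mulVec x i - b i))*A i j) := by
        rw [Finset.mul_sum]
        exact Finset.sum_congr rfl fun i _ => by ring
      calc t * (∑ i, (max 0 (A.mulVec x' i - b i))^2)
          ≤ t * ((∑ i, (max 0 (A.mulVec x i - b i))^2)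
              + s*(∑ i, 2*(max 0 (A.mulVec x i - b i))*A i j)
              + s^2*(∑ i, (A i j)^2)) := h3
        _ = t * (∑ i, (max 0 (A.mulVec x i - b i))^2)
              + s * (t * (∑ i, 2*(max 0 (A.mulVec x i - b i))*A i j))
              + s^2 * (t * (∑ i, (A i j)^2)) := by ring
        _ = t * (∑ i, (max 0 (A.mulVec x i - b i))^2)
              + s * (∑ i, (2*t*max 0 (A.mulVec x i - b i)) * A i j)
              + s^2 * (t * (∑ i, (A i j)^2)) := by rw [e3]
    have hub : Pen V lam c A b η t x' ≤ Pen V lam c A b η t x + (s * D + s^2 * MM) := by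
      unfold Pen
      rw [efobj, hD, hMM]
      have e4 : (∑ i, 2*(lam i * w i * V j i)) = 2*(∑ i, lam i * w i * V j i) := by
        rw [Finset.mul_sum]
      rw [e4] at *
      linarith [hpen]
    linarith [hup, hub]
  have h := hs (-D/(2*MM))
  have hMMne : MM ≠ 0 := ne_of_gt hMM0
  have e5 : -D/(2*MM) * D + (-D/(2*MM))^2 * MM = -(D^2)/(4*MM) := by
    field_simp
    ring
  rw [e5] at h
  have h4 : (0:ℝ) < 4*MM := by linarith
  rw [le_div_iff₀ h4, zero_mul] at h
  have hD2 : D^2 = 0 := le_antisymm (by linarith) (sq_nonneg D)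
  have := pow_eq_zero_iff (n := 2) (by norm_num) |>.mp hD2
  rw [hD] at this
  exact this

end Stmt14Aux

namespace Stmt14Aux
open Matrix Finset

variable {n k m : ℕ} (V : Matrix (Fin n) (Fin k) ℝ) (lam : Fin k → ℝ)
  (c : Fin n → ℝ) (A : Matrix (Fin m) (Fin n) ℝ) (b : Fin m → ℝ) (η θ : ℝ)

lemma Hval (hlam : ∀ i, 0 ≤ lam i) (hη : 0 < η)
    (z : Fin n → ℝ) (hz : ∀ j, z j = 0 ∨ z j = 1) (t : ℝ) (x : Fin n → ℝ)
    (hxE : ∀ j, z j = 0 → x j = 0)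
    (hstat : ∀ j, z j = 1 →
      c j + 2*(∑ i, lam i * ((fun l => V l i) ⬝ᵥ x) * V j i) + 2*η⁻¹*(x j)
        + (∑ i, (2*t*max 0 (A.mulVec x i - b i)) * A i j) = 0) :
    Hfun V lam c A b η θ z
        (fun i => 2*Real.sqrt (lam i) * ((fun l => V l i) ⬝ᵥ x))
        (fun i => 2*t*max 0 (A.mulVec x i - b i))
      = fobj V lam c η x + θ * (∑ j, z j)
        + ∑ i, (2*t*max 0 (A.mulVec x i - b i)) * (A.mulVec x i - b i) := by
  set α : Fin k → ℝ := fun i => 2*Real.sqrt (lam i) * ((fun l => V l i) ⬝ᵥ x) with hα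
  set β : Fin m → ℝ := fun i => 2*t*max 0 (A.mulVec x i - b i) with hβ
  have hk := key V lam c A b η θ hlam hη z x hz hxE α β
  have hS1 : (∑ i, (Real.sqrt (lam i) * ((fun j => V j i) ⬝ᵥ x) - α i / 2)^2) = 0 := by
    apply Finset.sum_eq_zero
    intro i _
    rw [hα]
    ring_nf
  have hS2 : (∑ j, z j * (x j / Real.sqrt η + Real.sqrt η * gam V lam c A α β j / 2)^2)
      = 0 := by
    apply Finset.sum_eq_zero
    intro j _
    rcases hz j with h0 | h1
    · rw [h0, zero_mul]
    · have hγj : gam V lam c A α β j = -(2*η⁻¹*(x j)) := by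
        simp only [gam, Pi.add_apply, mulVec, dotProduct, Matrix.transpose_apply]
        have e1 : (∑ i, V j i * (Real.sqrt (lam i) * α i))
            = 2*(∑ i, lam i * ((fun l => V l i) ⬝ᵥ x) * V j i) := by
          rw [Finset.mul_sum]
          apply Finset.sum_congr rfl
          intro i _
          rw [hα]
          have hss := Real.mul_self_sqrt (hlam i)
          linear_combination (2 * V j i * ((fun l => V l i) ⬝ᵥ x)) * hss
        rw [e1]
        have e2 : (∑ i, A i j * β i) = ∑ i, (2*t*max 0 (A.mulVec x i - b i)) * A i j := by
          apply Finset.sum_congr rfl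
          intro i _
          rw [hβ]
          ring
        rw [e2]
        have h := hstat j h1
        linarith
      rw [hγj, h1, one_mul]
      have hne : Real.sqrt η ≠ 0 := by positivity
      have hss := Real.mul_self_sqrt hη.le
      have hzero : x j / Real.sqrt η + Real.sqrt η * -(2*η⁻¹*(x j)) / 2 = 0 := by
        have hηne : η ≠ 0 := ne_of_gt hη
        field_simp
        linear_combination (-x j) * hss
      rw [hzero]
      ring
  have hb : (∑ i, β i * (b i - A.mulVec x i))
      = -(∑ i, (2*t*max 0 (A.mulVec x i - b i)) * (A.mulVec x i - b i)) := by
    rw [← Finset.sum_neg_distrib]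
    apply Finset.sum_congr rfl
    intro i _
    rw [hβ]
    ring
  rw [hS1, hS2, hb] at hk
  linarith

lemma max_mul_self (u : ℝ) : max 0 u * u = (max 0 u)^2 := by
  rcases le_total u 0 with h|h
  · rw [max_eq_left h]; ring
  · rw [max_eq_right h]; ring

lemma strong (hlam : ∀ i, 0 ≤ lam i) (hη : 0 < η)
    (z : Fin n → ℝ) (hz : ∀ j, z j = 0 ∨ z j = 1)
    (hSne : ∃ x : Fin n → ℝ, (∀ i, A.mulVec x i ≤ b i) ∧ (∀ j, z j = 0 → x j = 0)) :
    sSup {u | ∃ (α : Fin k → ℝ) (β : Fin m → ℝ),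
        (∀ i, (0:ℝ) ≤ β i) ∧ u = Hfun V lam c A b η θ z α β}
      = θ * (∑ j, z j)
        + sInf {u | ∃ x : Fin n → ℝ, (∀ i, A.mulVec x i ≤ b i) ∧
            (∀ j, z j = 0 → x j = 0) ∧ u = fobj V lam c η x} := by
  classical
  obtain ⟨x₀, hx₀A, hx₀E⟩ := hSne
  set Cc := ∑ j, (c j)^2 with hCc
  have hCc0 : 0 ≤ Cc := Finset.sum_nonneg fun j _ => sq_nonneg _
  have hflb : ∀ x : Fin n → ℝ, -(η/2)*Cc ≤ fobj V lam c η x := by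
    intro x
    have h := flb V lam c η hlam hη x
    have h2 : 0 ≤ (2*η)⁻¹ * (∑ j, (x j)^2) := by positivity
    rw [hCc]
    linarith
  set S : Set ℝ := {u | ∃ x : Fin n → ℝ, (∀ i, A.mulVec x i ≤ b i) ∧
      (∀ j, z j = 0 → x j = 0) ∧ u = fobj V lam c η x} with hS
  have hSne' : S.Nonempty := ⟨fobj V lam c η x₀, x₀, hx₀A, hx₀E, rfl⟩
  have hSbdd : BddBelow S := ⟨-(η/2)*Cc, fun u ⟨x, _, _, hu⟩ => hu ▸ hflb x⟩
  set mz := sInf S with hmz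
  set HS : Set ℝ := {u | ∃ (α : Fin k → ℝ) (β : Fin m → ℝ),
      (∀ i, (0:ℝ) ≤ β i) ∧ u = Hfun V lam c A b η θ z α β} with hHS
  have hHSne : HS.Nonempty := ⟨_, 0, 0, fun i => le_refl 0, rfl⟩
  have hHSbdd : BddAbove HS := by
    refine ⟨fobj V lam c η x₀ + θ * (∑ j, z j), ?_⟩
    rintro u ⟨α, β, hβ, rfl⟩
    exact weak V lam c A b η θ hlam hη z x₀ hz hx₀E hx₀A α β hβ
  have hle : sSup HS ≤ θ * (∑ j, z j) + mz := by
    apply csSup_le hHSne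
    rintro u ⟨α, β, hβ, rfl⟩
    have hlow : ∀ s ∈ S, Hfun V lam c A b η θ z α β - θ * (∑ j, z j) ≤ s := by
      rintro s ⟨x, hxA, hxE, rfl⟩
      have := weak V lam c A b η θ hlam hη z x hz hxE hxA α β hβ
      linarith
    have := le_csInf hSne' hlow
    rw [← hmz] at this
    linarith
  have hge : θ * (∑ j, z j) + mz ≤ sSup HS := by
    by_contra hcon
    push_neg at hcon
    set ε := θ * (∑ j, z j) + mz - sSup HS with hε
    have hε0 : 0 < ε := by rw [hε]; linarith
    -- for each natural t, a minimizer of the penalized problem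
    have hPt : ∀ t : ℕ, ∃ x : Fin n → ℝ, (∀ j, z j = 0 → x j = 0) ∧
        Pen V lam c A b η (t:ℝ) x ≤ mz - ε := by
      intro t
      obtain ⟨xt, hxtE, hxtmin⟩ :=
        exists_min V lam c A b η hlam hη z (t:ℝ) (Nat.cast_nonneg t)
      refine ⟨xt, hxtE, ?_⟩
      have hstat' : ∀ j, z j = 1 →
          c j + 2*(∑ i, lam i * ((fun l => V l i) ⬝ᵥ xt) * V j i) + 2*η⁻¹*(xt j)
            + (∑ i, (2*(t:ℝ)*max 0 (A.mulVec xt i - b i)) * A i j) = 0 :=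
        fun j hj => stat V lam c A b η hlam hη z (t:ℝ) (Nat.cast_nonneg t) xt hxtE hxtmin j hj
      have hHv := Hval V lam c A b η θ hlam hη z hz (t:ℝ) xt hxtE hstat'
      have hmem : Hfun V lam c A b η θ z
          (fun i => 2*Real.sqrt (lam i) * ((fun l => V l i) ⬝ᵥ xt))
          (fun i => 2*(t:ℝ)*max 0 (A.mulVec xt i - b i)) ∈ HS := by
        refine ⟨_, _, fun i => ?_, rfl⟩
        have : (0:ℝ) ≤ max 0 (A.mulVec xt i - b i) := le_max_left 0 _
        positivity
      have hsup := le_csSup hHSbdd hmem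
      rw [hHv] at hsup
      have hcross : (∑ i, (2*(t:ℝ)*max 0 (A.mulVec xt i - b i)) * (A.mulVec xt i - b i))
          = 2*(t:ℝ) * (∑ i, (max 0 (A.mulVec xt i - b i))^2) := by
        rw [Finset.mul_sum]
        apply Finset.sum_congr rfl
        intro i _
        rw [← max_mul_self]
        ring
      rw [hcross] at hsup
      have hq : 0 ≤ ∑ i, (max 0 (A.mulVec xt i - b i))^2 :=
        Finset.sum_nonneg fun i _ => sq_nonneg _
      have ht0 : (0:ℝ) ≤ (t:ℝ) := Nat.cast_nonneg t
      unfold Pen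
      nlinarith [hsup, hq, ht0]
    choose xs hxsE hxsP using hPt
    set C : ℕ → Set (Fin n → ℝ) := fun t =>
      {x | (∀ j, z j = 0 → x j = 0) ∧ Pen V lam c A b η (t:ℝ) x ≤ mz - ε} with hC
    have hCne : ∀ t, (C t).Nonempty := fun t => ⟨xs t, hxsE t, hxsP t⟩
    have hCcl : ∀ t, IsClosed (C t) := by
      intro t
      apply (isClosed_E z).inter
      exact isClosed_le (cont_Pen V lam c A b η (t:ℝ)) continuous_const
    have hCmono : ∀ t : ℕ, C (t+1) ⊆ C t := by
      intro t x ⟨hxE, hxP⟩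
      refine ⟨hxE, le_trans ?_ hxP⟩
      unfold Pen
      have hq : 0 ≤ ∑ i, (max 0 (A.mulVec x i - b i))^2 :=
        Finset.sum_nonneg fun i _ => sq_nonneg _
      have : ((t:ℝ)) ≤ ((t:ℝ)+1) := by linarith
      push_cast
      nlinarith
    have hC0comp : IsCompact (C 0) := by
      apply Metric.isCompact_of_isClosed_isBounded (hCcl 0)
      set R2 : ℝ := 2*η*((mz - ε) + (η/2)*Cc) with hR2
      have hsub : C 0 ⊆ Metric.closedBall 0 (Real.sqrt (max R2 0)) := by
        intro x ⟨hxE, hxP⟩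
        have hfx : fobj V lam c η x ≤ mz - ε := by
          unfold Pen at hxP
          have hq : 0 ≤ ((0:ℕ):ℝ) * ∑ i, (max 0 (A.mulVec x i - b i))^2 := by
            norm_num
          norm_num at hxP hq
          linarith
        have hx2 : ∑ j, (x j)^2 ≤ R2 := by
          have h := flb V lam c η hlam hη x
          have h3 : (2*η)⁻¹ * (∑ j, (x j)^2) ≤ (mz - ε) + (η/2)*Cc := by
            rw [hCc]
            linarith
          have h4 : (0:ℝ) < (2*η)⁻¹ := by positivity
          rw [hR2]
          calc ∑ j, (x j)^2 = (2*η) * ((2*η)⁻¹ * (∑ j, (x j)^2)) := by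
                field_simp
            _ ≤ 2*η*((mz - ε) + (η/2)*Cc) :=
                mul_le_mul_of_nonneg_left h3 (by linarith)
        rw [Metric.mem_closedBall, dist_pi_le_iff (Real.sqrt_nonneg _)]
        intro j
        rw [Real.dist_eq]
        simp only [Pi.zero_apply, sub_zero]
        rw [← Real.sqrt_sq_eq_abs]
        apply Real.sqrt_le_sqrt
        calc (x j)^2 ≤ ∑ j', (x j')^2 :=
              Finset.single_le_sum (fun j' _ => sq_nonneg (x j')) (mem_univ j)
          _ ≤ max R2 0 := le_max_of_le_left hx2
      exact (Metric.isBounded_closedBall).subset hsub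
    obtain ⟨xb, hxb⟩ := IsCompact.nonempty_iInter_of_sequence_nonempty_isCompact_isClosed
      C hCmono hCne hC0comp hCcl
    simp only [Set.mem_iInter] at hxb
    have hxbE : ∀ j, z j = 0 → xb j = 0 := (hxb 0).1
    set p := ∑ i, (max 0 (A.mulVec xb i - b i))^2 with hp
    have hp0 : 0 ≤ p := Finset.sum_nonneg fun i _ => sq_nonneg _
    have hfxb : fobj V lam c η xb ≤ mz - ε := by
      have := (hxb 0).2
      unfold Pen at this
      norm_num at this
      linarith
    have hpz : p = 0 := by
      by_contra hpne
      have hppos : 0 < p := lt_of_le_of_ne hp0 (Ne.symm hpne)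
      obtain ⟨N, hN⟩ := exists_nat_gt ((mz - ε - fobj V lam c η xb)/p)
      have hCN := (hxb N).2
      unfold Pen at hCN
      rw [← hp] at hCN
      have : (N:ℝ) * p ≤ mz - ε - fobj V lam c η xb := by linarith
      have h2 : (N:ℝ) ≤ (mz - ε - fobj V lam c η xb)/p := by
        rw [le_div_iff₀ hppos]
        linarith
      linarith
    have hfeas : ∀ i, A.mulVec xb i ≤ b i := by
      have hpz' : (∑ i, (max 0 (A.mulVec xb i - b i))^2) = 0 := by rw [← hp]; exact hpz
      have hall := (Finset.sum_eq_zero_iff_of_nonneg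
        (fun i (_ : i ∈ univ) => sq_nonneg (max 0 (A.mulVec xb i - b i)))).mp hpz'
      intro i
      have hterm := hall i (mem_univ i)
      have hmax : max 0 (A.mulVec xb i - b i) = 0 :=
        pow_eq_zero_iff (n := 2) (by norm_num) |>.mp hterm
      have := max_eq_left_iff.mp hmax
      linarith
    have hmzle : mz ≤ fobj V lam c η xb :=
      csInf_le hSbdd ⟨xb, hfeas, hxbE, rfl⟩
    linarith
  linarith

end Stmt14Aux

open Stmt14Aux in
/-- min-max characterization for the sparsity-penalized problem `(W_k)`. -/
theorem stmt14
    (n k m : ℕ) (hn : 1 ≤ n) (hk1 : 1 ≤ k) (hkn : k ≤ n)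
    (θ : ℝ) (hθ : 0 < θ)
    (Q : Matrix (Fin n) (Fin n) ℝ) (hQ : Q.PosSemidef)
    (lamFull : Fin n → ℝ) (v : Fin n → (Fin n → ℝ))
    (hlam_nonneg : ∀ i, 0 ≤ lamFull i)
    (hlam_sorted : ∀ i j : Fin n, i ≤ j → lamFull j ≤ lamFull i)
    (heig : ∀ i, Q.mulVec (v i) = lamFull i • v i)
    (hortho : ∀ i j, v i ⬝ᵥ v j = if i = j then (1:ℝ) else 0)
    (c : Fin n → ℝ) (A : Matrix (Fin m) (Fin n) ℝ) (b : Fin m → ℝ)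
    (η : ℝ) (hη : 0 < η)
    (V : Matrix (Fin n) (Fin k) ℝ)
    (hV : ∀ (j : Fin n) (i : Fin k), V j i = v (Fin.castLE hkn i) j)
    (lam : Fin k → ℝ) (hlamk : ∀ i, lam i = lamFull (Fin.castLE hkn i))
    -- optimal value of (W_k)
    (Uk : ℝ)
    (hUk : Uk = sInf {w | ∃ (x : Fin n → ℝ) (y : Fin k → ℝ),
      (∀ i, A.mulVec x i ≤ b i) ∧
      (∀ i : Fin k, Real.sqrt (lam i) * y i
          = Real.sqrt (lam i) * ((fun j => V j i) ⬝ᵥ x)) ∧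
      w = c ⬝ᵥ x + (∑ i, lam i * (y i)^2) + η⁻¹ * (∑ j, (x j)^2)
          + θ * ((Finset.univ.filter (fun j => x j ≠ 0)).card : ℝ)})
    -- for every binary z the restricted feasible set is nonempty
    (hfeasible : ∀ z : Fin n → ℝ, (∀ j, z j = 0 ∨ z j = 1) →
      ∃ x : Fin n → ℝ, (∀ i, A.mulVec x i ≤ b i) ∧ (∀ j, z j = 0 → x j = 0)) :
    IsLeast {w | ∃ z : Fin n → ℝ, (∀ j, z j = 0 ∨ z j = 1) ∧
        w = sSup {u | ∃ (α : Fin k → ℝ) (β : Fin m → ℝ),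
          (∀ i, (0:ℝ) ≤ β i) ∧ u = Hfun V lam c A b η θ z α β}} Uk := by
  classical
  have hlam : ∀ i, 0 ≤ lam i := fun i => by rw [hlamk i]; exact hlam_nonneg _
  set Cc := ∑ j, (c j)^2 with hCc
  have hCc0 : 0 ≤ Cc := Finset.sum_nonneg fun j _ => sq_nonneg _
  have hflb : ∀ x : Fin n → ℝ, -(η/2)*Cc ≤ fobj V lam c η x := by
    intro x
    have h := flb V lam c η hlam hη x
    have h2 : 0 ≤ (2*η)⁻¹ * (∑ j, (x j)^2) := by positivity
    rw [hCc]
    linarith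
  -- the value set of (W_k)
  set T : Set ℝ := {w | ∃ (x : Fin n → ℝ) (y : Fin k → ℝ),
      (∀ i, A.mulVec x i ≤ b i) ∧
      (∀ i : Fin k, Real.sqrt (lam i) * y i
          = Real.sqrt (lam i) * ((fun j => V j i) ⬝ᵥ x)) ∧
      w = c ⬝ᵥ x + (∑ i, lam i * (y i)^2) + η⁻¹ * (∑ j, (x j)^2)
          + θ * ((Finset.univ.filter (fun j => x j ≠ 0)).card : ℝ)} with hTdef
  have hT : T = {w | ∃ x : Fin n → ℝ, (∀ i, A.mulVec x i ≤ b i) ∧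
      w = fobj V lam c η x
        + θ * ((Finset.univ.filter (fun j => x j ≠ 0)).card : ℝ)} := by
    ext w
    constructor
    · rintro ⟨x, y, hxA, hy, rfl⟩
      refine ⟨x, hxA, ?_⟩
      unfold fobj
      have hyy : (∑ i, lam i * (y i)^2)
          = ∑ i, lam i * (((fun j => V j i) ⬝ᵥ x))^2 := by
        apply Finset.sum_congr rfl
        intro i _
        rcases eq_or_lt_of_le (hlam i) with h0 | hpos
        · rw [← h0]; ring
        · have hs : Real.sqrt (lam i) ≠ 0 := by positivity
          rw [mul_left_cancel₀ hs (hy i)]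
      rw [hyy]
    · rintro ⟨x, hxA, rfl⟩
      exact ⟨x, fun i => (fun j => V j i) ⬝ᵥ x, hxA, fun i => rfl, by unfold fobj; ring⟩
  have hTne : T.Nonempty := by
    obtain ⟨x, hxA, _⟩ := hfeasible (fun _ => 1) (fun j => Or.inr rfl)
    rw [hT]
    exact ⟨_, x, hxA, rfl⟩
  have hTbdd : BddBelow T := by
    rw [hT]
    refine ⟨-(η/2)*Cc, ?_⟩
    rintro w ⟨x, hxA, rfl⟩
    have h1 := hflb x
    have h2 : 0 ≤ θ * ((Finset.univ.filter (fun j => x j ≠ 0)).card : ℝ) := by positivity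
    linarith
  -- the candidate min over binary z
  set B : Set (Fin n → ℝ) := {z | ∀ j, z j = 0 ∨ z j = 1} with hB
  have hBfin : B.Finite := by
    apply Set.Finite.subset
      (Set.Finite.pi (fun _ : Fin n => (Set.finite_singleton (1:ℝ)).insert 0))
    intro z hz
    rw [Set.mem_pi]
    intro j _
    rcases hz j with h | h <;> rw [h] <;> simp
  set G : (Fin n → ℝ) → ℝ := fun z => sSup {u | ∃ (α : Fin k → ℝ) (β : Fin m → ℝ),
      (∀ i, (0:ℝ) ≤ β i) ∧ u = Hfun V lam c A b η θ z α β} with hG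
  obtain ⟨z₀, hz₀B, hz₀min⟩ :=
    Set.exists_min_image B G hBfin ⟨fun _ => 1, fun j => Or.inr rfl⟩
  have hGeq : ∀ z ∈ B, G z = θ * (∑ j, z j)
      + sInf {u | ∃ x : Fin n → ℝ, (∀ i, A.mulVec x i ≤ b i) ∧
          (∀ j, z j = 0 → x j = 0) ∧ u = fobj V lam c η x} :=
    fun z hz => strong V lam c A b η θ hlam hη z hz (hfeasible z hz)
  have hSbdd : ∀ z : Fin n → ℝ, BddBelow {u | ∃ x : Fin n → ℝ,
      (∀ i, A.mulVec x i ≤ b i) ∧ (∀ j, z j = 0 → x j = 0) ∧ u = fobj V lam c η x} :=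
    fun z => ⟨-(η/2)*Cc, by rintro u ⟨x, _, _, rfl⟩; exact hflb x⟩
  -- for binary z, card of support ≤ sum of z when supported in z
  have hcard : ∀ z ∈ B, ∀ x : Fin n → ℝ, (∀ j, z j = 0 → x j = 0) →
      ((Finset.univ.filter (fun j => x j ≠ 0)).card : ℝ) ≤ ∑ j, z j := by
    intro z hz x hx
    have e1 : (∑ j, z j) = ((Finset.univ.filter (fun j => z j = 1)).card : ℝ) := by
      rw [← Finset.sum_boole]
      apply Finset.sum_congr rfl
      intro j _
      rcases hz j with h | h <;> simp [h]
    rw [e1]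
    have hsub : Finset.univ.filter (fun j => x j ≠ 0)
        ⊆ Finset.univ.filter (fun j => z j = 1) := by
      intro j hj
      simp only [Finset.mem_filter, Finset.mem_univ, true_and] at hj ⊢
      rcases hz j with h | h
      · exact absurd (hx j h) hj
      · exact h
    exact_mod_cast Nat.cast_le.mpr (Finset.card_le_card hsub)
  have hUkle : ∀ z ∈ B, Uk ≤ G z := by
    intro z hz
    rw [hGeq z hz]
    have hlow : ∀ u ∈ {u | ∃ x : Fin n → ℝ, (∀ i, A.mulVec x i ≤ b i) ∧
        (∀ j, z j = 0 → x j = 0) ∧ u = fobj V lam c η x},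
        Uk - θ * (∑ j, z j) ≤ u := by
      rintro u ⟨x, hxA, hxE, rfl⟩
      have h1 : Uk ≤ fobj V lam c η x
          + θ * ((Finset.univ.filter (fun j => x j ≠ 0)).card : ℝ) := by
        rw [hUk]
        exact csInf_le hTbdd (by rw [hT]; exact ⟨x, hxA, rfl⟩)
      have h2 := mul_le_mul_of_nonneg_left (hcard z hz x hxE) hθ.le
      linarith
    have hSne : {u | ∃ x : Fin n → ℝ, (∀ i, A.mulVec x i ≤ b i) ∧
        (∀ j, z j = 0 → x j = 0) ∧ u = fobj V lam c η x}.Nonempty := by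
      obtain ⟨x, h1, h2⟩ := hfeasible z hz
      exact ⟨_, x, h1, h2, rfl⟩
    have := le_csInf hSne hlow
    linarith
  constructor
  · -- membership: Uk = G z₀
    refine ⟨z₀, hz₀B, ?_⟩
    have hGz₀le : G z₀ ≤ Uk := by
      rw [hUk]
      apply le_csInf hTne
      intro w hw
      rw [hT] at hw
      obtain ⟨x, hxA, rfl⟩ := hw
      set zx : Fin n → ℝ := fun j => if x j = 0 then 0 else 1 with hzx
      have hzxB : zx ∈ B := fun j => by by_cases h : x j = 0 <;> simp [hzx, h]
      have hzxE : ∀ j, zx j = 0 → x j = 0 := by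
        intro j hj
        by_contra h
        simp [hzx, h] at hj
      have hsum : (∑ j, zx j)
          = ((Finset.univ.filter (fun j => x j ≠ 0)).card : ℝ) := by
        rw [← Finset.sum_boole]
        apply Finset.sum_congr rfl
        intro j _
        by_cases h : x j = 0 <;> simp [hzx, h]
      have h1 : G z₀ ≤ G zx := hz₀min zx hzxB
      have h2 : G zx ≤ θ * (∑ j, zx j) + fobj V lam c η x := by
        rw [hGeq zx hzxB]
        have hmem : fobj V lam c η x ∈ {u | ∃ x' : Fin n → ℝ,
            (∀ i, A.mulVec x' i ≤ b i) ∧ (∀ j, zx j = 0 → x' j = 0) ∧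
            u = fobj V lam c η x'} := ⟨x, hxA, hzxE, rfl⟩
        have := csInf_le (hSbdd zx) hmem
        linarith
      rw [hsum] at h2
      linarith
    exact le_antisymm (hUkle z₀ hz₀B) hGz₀le
  · -- lower bound
    rintro w ⟨z, hz, rfl⟩
    exact hUkle z hz
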